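/- If n ≥ 2, r ≥ 1 and n > r + 1, then η_dl(K_n ∘ \overline{K_r}) ≤ ⌈(n + r) / (r + 1)⌉. -/
import Mathlib


attribute [local instance] Classical.propDecidable

/-- The d-lucky sum of a vertex `u`. -/
noncomputable def dLuckySum {V : Type*} [Fintype V] (G : SimpleGraph V) (ℓ : V → ℕ)
    (u : V) : ℕ :=
  G.degree u + ∑ v ∈ G.neighborFinset u, ℓ v

/-- A labeling is d-lucky if adjacent vertices have distinct d-lucky sums. -/
def IsDLuckyLabeling {V : Type*} [Fintype V] (G : SimpleGraph V) (ℓ : V → ℕ) : Prop :=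
  ∀ ⦃u v : V⦄, G.Adj u v → dLuckySum G ℓ u ≠ dLuckySum G ℓ v

/-- The d-lucky number: the least positive integer `k` such that `G` admits a
d-lucky labeling with labels in `{1, …, k}`. -/
noncomputable def dLuckyNumber {V : Type*} [Fintype V] (G : SimpleGraph V) : ℕ :=
  sInf {k : ℕ | 0 < k ∧ ∃ ℓ : V → ℕ, (∀ v : V, 1 ≤ ℓ v ∧ ℓ v ≤ k) ∧ IsDLuckyLabeling G ℓ}

/-- Generating relation for the corona `Kₙ ∘ (complement of K_r)`:
`Sum.inl i` is vertex `vᵢ` of the complete graph `Kₙ`, and `Sum.inr (i, a)`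
is the pendant vertex `p_{i,a}` attached to `vᵢ`. -/
def coronaRel (n r : ℕ) : (Fin n ⊕ Fin n × Fin r) → (Fin n ⊕ Fin n × Fin r) → Prop
  | Sum.inl _, Sum.inl _ => True
  | Sum.inl i, Sum.inr p => p.1 = i
  | _, _ => False

/-- The corona `Kₙ ∘ (complement of K_r)`: the vertices `v₁, …, vₙ` are pairwise
adjacent, each pendant vertex `p_{i,a}` is adjacent exactly to `vᵢ`, and there
are no other edges. -/
def corona (n r : ℕ) : SimpleGraph (Fin n ⊕ Fin n × Fin r) :=
  SimpleGraph.fromRel (coronaRel n r)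


open Finset in
private lemma sum_min_clamp (c : ℕ) :
    ∀ (R m : ℕ), (∑ a ∈ Finset.range R, min c (m - a*c)) = min m (R*c) := by
  intro R
  induction R with
  | zero => intro m; simp
  | succ R ih =>
    intro m
    rw [Finset.sum_range_succ, ih, Nat.succ_mul]
    generalize R*c = Q
    omega

private lemma sum_ite_ne {n : ℕ} (f : Fin n → ℕ) (i : Fin n) :
    (∑ j, if j ≠ i then f j else 0) + f i = ∑ j, f j := by
  have h1 : ∀ j ∈ Finset.univ, f j
      = (if j ≠ i then f j else 0) + (if j = i then f j else 0) := by
    intro j _; by_cases h : j = i <;> simp [h]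
  rw [Finset.sum_congr rfl h1, Finset.sum_add_distrib, Finset.sum_ite_eq' Finset.univ i f]
  simp

private lemma corona_adj_inl_inl {n r : ℕ} (i j : Fin n) :
    (corona n r).Adj (Sum.inl i) (Sum.inl j) ↔ i ≠ j := by
  rw [corona, SimpleGraph.fromRel_adj]
  exact ⟨fun h e => h.1 (by rw [e]), fun h => ⟨by simpa using h, Or.inl trivial⟩⟩

private lemma corona_adj_inl_inr {n r : ℕ} (i : Fin n) (p : Fin n × Fin r) :
    (corona n r).Adj (Sum.inl i) (Sum.inr p) ↔ p.1 = i := by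
  rw [corona, SimpleGraph.fromRel_adj]
  constructor
  · rintro ⟨-, h | h⟩
    · exact h
    · exact h.elim
  · intro h
    exact ⟨by simp, Or.inl h⟩

private lemma corona_adj_inr_inl {n r : ℕ} (i : Fin n) (p : Fin n × Fin r) :
    (corona n r).Adj (Sum.inr p) (Sum.inl i) ↔ p.1 = i := by
  rw [SimpleGraph.adj_comm]; exact corona_adj_inl_inr i p

private lemma corona_adj_inr_inr {n r : ℕ} (p q : Fin n × Fin r) :
    ¬ (corona n r).Adj (Sum.inr p) (Sum.inr q) := by
  rw [corona, SimpleGraph.fromRel_adj]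
  rintro ⟨-, h | h⟩ <;> exact h

private lemma dLuckySum_eq_sum {V : Type*} [Fintype V] (G : SimpleGraph V) (ℓ : V → ℕ)
    (u : V) : dLuckySum G ℓ u = ∑ v ∈ G.neighborFinset u, (1 + ℓ v) := by
  unfold dLuckySum SimpleGraph.degree
  rw [Finset.card_eq_sum_ones, ← Finset.sum_add_distrib]

private lemma neighborFinset_inr {n r : ℕ} (p : Fin n × Fin r) :
    (corona n r).neighborFinset (Sum.inr p) = {Sum.inl p.1} := by
  ext x
  rw [SimpleGraph.mem_neighborFinset]
  cases x with
  | inl i => simp [corona_adj_inr_inl]; exact comm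
  | inr q => simp [corona_adj_inr_inr]

private lemma dLuckySum_inr {n r : ℕ} (ℓ : (Fin n ⊕ Fin n × Fin r) → ℕ)
    (p : Fin n × Fin r) :
    dLuckySum (corona n r) ℓ (Sum.inr p) = 1 + ℓ (Sum.inl p.1) := by
  rw [dLuckySum_eq_sum, neighborFinset_inr, Finset.sum_singleton]

private lemma dLuckySum_inl {n r : ℕ} (ℓ : (Fin n ⊕ Fin n × Fin r) → ℕ) (i : Fin n) :
    dLuckySum (corona n r) ℓ (Sum.inl i) + (1 + ℓ (Sum.inl i)) =
      (∑ j : Fin n, (1 + ℓ (Sum.inl j))) + ∑ a : Fin r, (1 + ℓ (Sum.inr (i, a))) := by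
  have hN : (corona n r).neighborFinset (Sum.inl i)
      = Finset.univ.filter ((corona n r).Adj (Sum.inl i)) := by
    ext x; simp [SimpleGraph.mem_neighborFinset]
  rw [dLuckySum_eq_sum, hN, Finset.sum_filter, Fintype.sum_sum_type]
  have h1 : (∑ j : Fin n, if (corona n r).Adj (Sum.inl i) (Sum.inl j)
        then (1 + ℓ (Sum.inl j)) else 0)
      = ∑ j : Fin n, if j ≠ i then (1 + ℓ (Sum.inl j)) else 0 := by
    refine Finset.sum_congr rfl fun j _ => ?_
    rw [corona_adj_inl_inl]
    by_cases h : j = i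
    · simp [h]
    · simp [h, Ne.symm h]
  have h2 : (∑ p : Fin n × Fin r, if (corona n r).Adj (Sum.inl i) (Sum.inr p)
        then (1 + ℓ (Sum.inr p)) else 0)
      = ∑ a : Fin r, (1 + ℓ (Sum.inr (i, a))) := by
    rw [Fintype.sum_prod_type]
    have h3 : ∀ j ∈ (Finset.univ : Finset (Fin n)),
        (∑ a : Fin r, if (corona n r).Adj (Sum.inl i) (Sum.inr (j, a))
          then (1 + ℓ (Sum.inr (j, a))) else 0)
        = if j = i then (∑ a : Fin r, (1 + ℓ (Sum.inr (j, a)))) else 0 := by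
      intro j _
      by_cases h : j = i <;> simp [h, corona_adj_inl_inr]
    rw [Finset.sum_congr rfl h3, Finset.sum_ite_eq' Finset.univ i]
    simp
  rw [h1, h2, add_right_comm, sum_ite_ne (fun j => 1 + ℓ (Sum.inl j)) i]

theorem dLuckyNumber_corona_upper (n r : ℕ) (hn : 2 ≤ n) (hr : 1 ≤ r)
    (hnr : r + 1 < n) :
    dLuckyNumber (corona n r) ≤ ⌈((n : ℚ) + (r : ℚ)) / ((r : ℚ) + 1)⌉₊ := by
  set k : ℕ := ⌈((n : ℚ) + (r : ℚ)) / ((r : ℚ) + 1)⌉₊ with hkdef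
  have hrq : (0:ℚ) < (r:ℚ) + 1 := by positivity
  have hA : n + r ≤ k * (r + 1) := by
    have h := Nat.le_ceil (((n:ℚ) + r) / ((r:ℚ) + 1))
    rw [div_le_iff₀ hrq] at h
    have h2 : ((n:ℚ) + r) ≤ ((k * (r + 1) : ℕ) : ℚ) := by push_cast; linarith
    exact_mod_cast h2
  have hk1 : 1 ≤ k := by
    rcases Nat.eq_zero_or_pos k with h | h
    · rw [h, zero_mul] at hA; omega
    · exact h
  have hB : (k - 1) * (r + 1) < n + r := by
    have h1 : ((k - 1 : ℕ) : ℚ) < ((n:ℚ) + r) / ((r:ℚ) + 1) := by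
      rw [← Nat.lt_ceil]; omega
    rw [lt_div_iff₀ hrq] at h1
    have h2 : (((k - 1) * (r + 1) : ℕ) : ℚ) < ((n:ℚ) + r) := by push_cast; linarith
    exact_mod_cast h2
  set K := k - 1 with hKdef
  have hkK : k = K + 1 := by omega
  have hnK : n ≤ r * K + K + 1 := by
    have h4 : n + r ≤ r * K + K + r + 1 := by
      calc n + r ≤ (K + 1) * (r + 1) := by rw [← hkK]; exact hA
        _ = r * K + K + r + 1 := by ring
    omega
  have hK1 : 1 ≤ K := by
    by_contra h
    have hK0 : K = 0 := by omega
    rw [hK0, mul_zero] at hnK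
    omega
  have hBsmall : 2 * K ≤ n + r - 1 := by
    have h3 : 2 * K < n + r := by
      calc 2 * K = K * 2 := by ring
        _ ≤ K * (r + 1) := Nat.mul_le_mul_left K (by omega)
        _ = (k - 1) * (r + 1) := by rw [hKdef]
        _ < n + r := hB
    omega
  -- the labeling
  set lab : (Fin n ⊕ Fin n × Fin r) → ℕ :=
    Sum.elim (fun i => max 1 (k - i.val))
      (fun p => 1 + min K (p.1.val + 1 - k - p.2.val * K)) with hlabdef
  have hlab_inl : ∀ i : Fin n, lab (Sum.inl i) = max 1 (k - i.val) := fun i => rfl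
  have hlab_inr : ∀ p : Fin n × Fin r,
      lab (Sum.inr p) = 1 + min K (p.1.val + 1 - k - p.2.val * K) := fun p => rfl
  -- pendant-sum control
  have hm_le : ∀ i : Fin n, i.val + 1 - k ≤ r * K := by
    intro i
    have h5 : i.val < n := i.isLt
    omega
  have hP : ∀ i : Fin n,
      (∑ a : Fin r, (1 + lab (Sum.inr (i, a)))) = r + (r + (i.val + 1 - k)) := by
    intro i
    have hstep : (∑ a : Fin r, (1 + lab (Sum.inr (i, a))))
        = ∑ a ∈ Finset.range r, (1 + (1 + min K (i.val + 1 - k - a * K))) := by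
      rw [← Fin.sum_univ_eq_sum_range (fun a => (1 + (1 + min K (i.val + 1 - k - a * K)))) r]
      refine Finset.sum_congr rfl fun a _ => ?_
      rw [hlab_inr]
    rw [hstep, Finset.sum_add_distrib, Finset.sum_add_distrib, sum_min_clamp]
    have := hm_le i
    simp only [Finset.sum_const, Finset.card_range, smul_eq_mul, mul_one]
    omega
  -- total over the complete-graph part
  set T := ∑ j : Fin n, lab (Sum.inl j) with hTdef
  have hsum_full : (∑ j : Fin n, (1 + lab (Sum.inl j))) = n + T := by
    rw [Finset.sum_add_distrib, hTdef]
    simp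
  have hTn : n ≤ T := by
    rw [hTdef]
    calc (n : ℕ) = ∑ _j : Fin n, 1 := by simp
      _ ≤ ∑ j : Fin n, lab (Sum.inl j) :=
        Finset.sum_le_sum fun j _ => by rw [hlab_inl]; omega
  -- d-lucky sums of the complete-graph vertices
  have hS : ∀ i : Fin n,
      dLuckySum (corona n r) lab (Sum.inl i) + 1 + k = n + T + 2 * r + i.val := by
    intro i
    have hD := dLuckySum_inl lab i
    rw [hsum_full, hP i, hlab_inl i] at hD
    have h5 : i.val < n := i.isLt
    omega
  have hSp : ∀ p : Fin n × Fin r,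
      dLuckySum (corona n r) lab (Sum.inr p) = 1 + max 1 (k - p.1.val) := by
    intro p
    rw [dLuckySum_inr, hlab_inl]
  -- conclude
  apply Nat.sInf_le
  refine ⟨by omega, lab, fun v => ?_, ?_⟩
  · cases v with
    | inl i => rw [hlab_inl]; omega
    | inr p =>
      rw [hlab_inr]
      constructor
      · omega
      · have : min K (p.1.val + 1 - k - p.2.val * K) ≤ K := min_le_left _ _
        omega
  · intro u v huv
    cases u with
    | inl i =>
      cases v with
      | inl j =>
        have hij : i ≠ j := (corona_adj_inl_inl i j).mp huv
        have h1 := hS i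
        have h2 := hS j
        have hval : i.val ≠ j.val := fun h => hij (Fin.val_injective h)
        omega
      | inr p =>
        have h1 := hS i
        have h2 := hSp p
        have h5 : p.1.val < n := p.1.isLt
        omega
    | inr p =>
      cases v with
      | inl j =>
        have h1 := hS j
        have h2 := hSp p
        have h5 : p.1.val < n := p.1.isLt
        omega
      | inr q => exact absurd huv (corona_adj_inr_inr p q)
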